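/- arXiv:2310.01052 — 5 statements merged into one kernel-verified Lean document; each statement's English description precedes it below -/
import Mathlib

section
/- Let A be a commutative Banach ring, i.e. a complete commutative normed ring with 1 ≠ 0, ‖1‖ = 1, and submultiplicative norm (‖a·b‖ ≤ ‖a‖·‖b‖). Then there exists at least one multiplicative seminorm f on A with f(a) ≤ ‖a‖ for all a ∈ A; that is, the Berkovich spectrum ℳ(A) of bounded multiplicative seminorms on A is nonempty. -/
open Filter Topology
set_option linter.unusedSectionVars false

private lemma berk_aux_le_of_forall_pos {a : ℝ} (F : ℝ → ℝ) (hF : ContinuousAt F 0)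
    (h : ∀ ε : ℝ, 0 < ε → a ≤ F ε) : a ≤ F 0 := by
  have h1 : Tendsto (fun n : ℕ => F (1 / (n + 1))) atTop (𝓝 (F 0)) :=
    hF.tendsto.comp tendsto_one_div_add_atTop_nhds_zero_nat
  exact ge_of_tendsto' h1 fun n => h _ (by positivity)

section Spec

variable {A : Type*} [NormedCommRing A] [NormOneClass A]

private noncomputable def berkSeq (x : A) (n : ℕ) : ℝ := ‖x ^ (n + 1)‖ ^ (((n : ℝ) + 1)⁻¹)

private noncomputable def berkSpec (x : A) : ℝ := ⨅ n : ℕ, berkSeq x n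

private lemma berkSeq_nonneg (x : A) (n : ℕ) : 0 ≤ berkSeq x n :=
  Real.rpow_nonneg (norm_nonneg _) _

private lemma berkSeq_bdd (x : A) : BddBelow (Set.range (berkSeq x)) :=
  ⟨0, by rintro r ⟨n, rfl⟩; exact berkSeq_nonneg x n⟩

private lemma berkSpec_nonneg (x : A) : 0 ≤ berkSpec x :=
  le_ciInf fun n => berkSeq_nonneg x n

private lemma berkSpec_le (x : A) (n : ℕ) : berkSpec x ≤ berkSeq x n :=
  ciInf_le (berkSeq_bdd x) n

private lemma berkSeq_pow (x : A) (n : ℕ) : berkSeq x n ^ (n + 1) = ‖x ^ (n + 1)‖ := by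
  have h1 : ((n : ℝ) + 1) ≠ 0 := by positivity
  rw [berkSeq, ← Real.rpow_natCast (‖x ^ (n + 1)‖ ^ (((n : ℝ) + 1)⁻¹)) (n + 1),
    ← Real.rpow_mul (norm_nonneg _)]
  push_cast
  rw [inv_mul_cancel₀ h1, Real.rpow_one]

/-- Upper bound interface. -/
private lemma berkSpec_le_of (x : A) {k : ℕ} (hk : 1 ≤ k) {t : ℝ} (ht : 0 ≤ t)
    (h : ‖x ^ k‖ ≤ t ^ k) : berkSpec x ≤ t := by
  obtain ⟨n, rfl⟩ : ∃ n : ℕ, n + 1 = k := ⟨k - 1, Nat.succ_pred_eq_of_pos hk⟩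
  refine le_trans (berkSpec_le x n) ?_
  have h2 : berkSeq x n ^ (n + 1) ≤ t ^ (n + 1) := by rw [berkSeq_pow]; exact h
  exact le_of_pow_le_pow_left₀ (Nat.succ_ne_zero n) ht h2

private lemma pow_berkSpec_le (x : A) {k : ℕ} (hk : 1 ≤ k) : berkSpec x ^ k ≤ ‖x ^ k‖ := by
  obtain ⟨n, rfl⟩ : ∃ n : ℕ, n + 1 = k := ⟨k - 1, Nat.succ_pred_eq_of_pos hk⟩
  rw [← berkSeq_pow]
  exact pow_le_pow_left₀ (berkSpec_nonneg x) (berkSpec_le x n) _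

private lemma berkSpec_le_norm (x : A) : berkSpec x ≤ ‖x‖ :=
  berkSpec_le_of x le_rfl (norm_nonneg x) (by rw [pow_one, pow_one])

private lemma berkSpec_zero : berkSpec (0 : A) = 0 :=
  le_antisymm (berkSpec_le_of 0 le_rfl le_rfl (by simp)) (berkSpec_nonneg 0)

private lemma berkSpec_one : berkSpec (1 : A) = 1 := by
  have h : berkSeq (1 : A) = fun _ => 1 := by
    funext n
    simp [berkSeq, Real.one_rpow]
  rw [berkSpec, h, ciInf_const]

private lemma berkSpec_neg (x : A) : berkSpec (-x) = berkSpec x := by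
  have h : berkSeq (-x) = berkSeq x := by
    funext n
    have : ‖(-x) ^ (n + 1)‖ = ‖x ^ (n + 1)‖ := by
      rcases Nat.even_or_odd (n + 1) with he | ho
      · rw [he.neg_pow]
      · rw [ho.neg_pow, norm_neg]
    simp [berkSeq, this]
  rw [berkSpec, berkSpec, h]
private lemma berkSpec_mul_le (x y : A) : berkSpec (x * y) ≤ berkSpec x * berkSpec y := by
  have key : ∀ ε : ℝ, 0 < ε →
      berkSpec (x * y) ≤ (berkSpec x + ε) * (berkSpec y + ε) := by
    intro ε hε
    obtain ⟨n, hn⟩ := exists_lt_of_ciInf_lt (show berkSpec x < berkSpec x + ε by linarith)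
    obtain ⟨m, hm⟩ := exists_lt_of_ciInf_lt (show berkSpec y < berkSpec y + ε by linarith)
    set u := berkSpec x + ε with hu
    set v := berkSpec y + ε with hv
    have hu0 : 0 ≤ u := le_of_lt (lt_of_le_of_lt (berkSpec_nonneg x) (by linarith))
    have hv0 : 0 ≤ v := le_of_lt (lt_of_le_of_lt (berkSpec_nonneg y) (by linarith))
    set N := (n + 1) * (m + 1) with hN
    have hN1 : 1 ≤ N := Nat.one_le_iff_ne_zero.mpr (by positivity)
    have hxN : ‖x ^ N‖ ≤ u ^ N := by
      calc ‖x ^ N‖ = ‖(x ^ (n + 1)) ^ (m + 1)‖ := by rw [← pow_mul]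
        _ ≤ ‖x ^ (n + 1)‖ ^ (m + 1) := norm_pow_le _ _
        _ = (berkSeq x n ^ (n + 1)) ^ (m + 1) := by rw [berkSeq_pow]
        _ ≤ (u ^ (n + 1)) ^ (m + 1) :=
            pow_le_pow_left₀ (pow_nonneg (berkSeq_nonneg x n) _)
              (pow_le_pow_left₀ (berkSeq_nonneg x n) (le_of_lt hn) _) _
        _ = u ^ N := by rw [← pow_mul]
    have hyN : ‖y ^ N‖ ≤ v ^ N := by
      calc ‖y ^ N‖ = ‖(y ^ (m + 1)) ^ (n + 1)‖ := by rw [← pow_mul, Nat.mul_comm]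
        _ ≤ ‖y ^ (m + 1)‖ ^ (n + 1) := norm_pow_le _ _
        _ = (berkSeq y m ^ (m + 1)) ^ (n + 1) := by rw [berkSeq_pow]
        _ ≤ (v ^ (m + 1)) ^ (n + 1) :=
            pow_le_pow_left₀ (pow_nonneg (berkSeq_nonneg y m) _)
              (pow_le_pow_left₀ (berkSeq_nonneg y m) (le_of_lt hm) _) _
        _ = v ^ N := by rw [← pow_mul, Nat.mul_comm]
    refine berkSpec_le_of _ hN1 (by positivity) ?_
    calc ‖(x * y) ^ N‖ = ‖x ^ N * y ^ N‖ := by rw [mul_pow]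
      _ ≤ ‖x ^ N‖ * ‖y ^ N‖ := norm_mul_le _ _
      _ ≤ u ^ N * v ^ N := mul_le_mul hxN hyN (norm_nonneg _) (by positivity)
      _ = (u * v) ^ N := (mul_pow u v N).symm
  have := berk_aux_le_of_forall_pos
    (fun ε => (berkSpec x + ε) * (berkSpec y + ε)) (by fun_prop) key
  simpa using this

private lemma berkSpec_isPowMul : IsPowMul (berkSpec (A := A)) := by
  intro a k hk
  apply le_antisymm
  · have key : ∀ ε : ℝ, 0 < ε → berkSpec (a ^ k) ≤ (berkSpec a + ε) ^ k := by
      intro ε hε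
      obtain ⟨n, hn⟩ := exists_lt_of_ciInf_lt (show berkSpec a < berkSpec a + ε by linarith)
      have h0 : (0:ℝ) ≤ berkSpec a + ε := by
        have := berkSpec_nonneg a; linarith
      refine berkSpec_le_of _ (Nat.one_le_iff_ne_zero.mpr (Nat.succ_ne_zero n)) (by positivity) ?_
      calc ‖(a ^ k) ^ (n + 1)‖ = ‖(a ^ (n + 1)) ^ k‖ := by
            rw [← pow_mul, ← pow_mul, Nat.mul_comm]
        _ ≤ ‖a ^ (n + 1)‖ ^ k := norm_pow_le _ _
        _ = (berkSeq a n ^ (n + 1)) ^ k := by rw [berkSeq_pow]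
        _ ≤ ((berkSpec a + ε) ^ (n + 1)) ^ k :=
            pow_le_pow_left₀ (pow_nonneg (berkSeq_nonneg a n) _)
              (pow_le_pow_left₀ (berkSeq_nonneg a n) (le_of_lt hn) _) _
        _ = ((berkSpec a + ε) ^ k) ^ (n + 1) := by rw [← pow_mul, ← pow_mul, Nat.mul_comm]
    have := berk_aux_le_of_forall_pos (fun ε => (berkSpec a + ε) ^ k) (by fun_prop) key
    simpa using this
  · refine le_ciInf fun n => ?_
    refine le_of_pow_le_pow_left₀ (Nat.succ_ne_zero n) (berkSeq_nonneg _ n) ?_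
    calc (berkSpec a ^ k) ^ (n + 1) = berkSpec a ^ (k * (n + 1)) := by rw [← pow_mul]
      _ ≤ ‖a ^ (k * (n + 1))‖ := pow_berkSpec_le a (Nat.one_le_iff_ne_zero.mpr (Nat.mul_ne_zero (by omega) (Nat.succ_ne_zero n)))
      _ = ‖(a ^ k) ^ (n + 1)‖ := by rw [← pow_mul]
      _ = berkSeq (a ^ k) n ^ (n + 1) := (berkSeq_pow _ n).symm

private lemma berk_exists_pow_bound (x : A) {u : ℝ} (hu : 0 < u) (hxu : berkSpec x < u) :
    ∃ M : ℝ, 1 ≤ M ∧ ∀ k : ℕ, ‖x ^ k‖ ≤ M * u ^ k := by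
  obtain ⟨n₀, hn₀⟩ := exists_lt_of_ciInf_lt hxu
  set p := n₀ + 1 with hp
  have hp1 : 1 ≤ p := Nat.le_add_left 1 n₀
  have hxp : ‖x ^ p‖ ≤ u ^ p := by
    rw [← berkSeq_pow]
    exact pow_le_pow_left₀ (berkSeq_nonneg x n₀) (le_of_lt hn₀) p
  set m := max 1 (‖x‖ / u) with hm
  have hm1 : (1:ℝ) ≤ m := le_max_left _ _
  have hxm : ‖x‖ ≤ m * u := by
    have : ‖x‖ / u ≤ m := le_max_right _ _
    calc ‖x‖ = ‖x‖ / u * u := by field_simp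
      _ ≤ m * u := by gcongr
  refine ⟨m ^ p, one_le_pow₀ hm1, fun k => ?_⟩
  have hk : p * (k / p) + k % p = k := Nat.div_add_mod k p
  have hr : k % p ≤ p := le_of_lt (Nat.mod_lt k (by omega))
  calc ‖x ^ k‖ = ‖(x ^ p) ^ (k / p) * x ^ (k % p)‖ := by rw [← pow_mul, ← pow_add, hk]
    _ ≤ ‖(x ^ p) ^ (k / p)‖ * ‖x ^ (k % p)‖ := norm_mul_le _ _
    _ ≤ ‖x ^ p‖ ^ (k / p) * ‖x‖ ^ (k % p) := by
        gcongr
        exacts [norm_pow_le _ _, norm_pow_le _ _]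
    _ ≤ (u ^ p) ^ (k / p) * (m * u) ^ (k % p) := by
        gcongr
    _ = m ^ (k % p) * u ^ (p * (k / p) + k % p) := by rw [mul_pow, ← pow_mul, pow_add]; ring
    _ ≤ m ^ p * u ^ k := by
        rw [hk]
        gcongr
private lemma berkSpec_add_le (x y : A) : berkSpec (x + y) ≤ berkSpec x + berkSpec y := by
  have key : ∀ ε : ℝ, 0 < ε →
      berkSpec (x + y) ≤ (berkSpec x + ε) + (berkSpec y + ε) := by
    intro ε hε
    set u := berkSpec x + ε with hu
    set v := berkSpec y + ε with hv
    have hu0 : 0 < u := lt_of_le_of_lt (berkSpec_nonneg x) (by rw [hu]; linarith)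
    have hv0 : 0 < v := lt_of_le_of_lt (berkSpec_nonneg y) (by rw [hv]; linarith)
    obtain ⟨Mx, hMx1, hMx⟩ := berk_exists_pow_bound x hu0 (by rw [hu]; linarith)
    obtain ⟨My, hMy1, hMy⟩ := berk_exists_pow_bound y hv0 (by rw [hv]; linarith)
    set C := Mx * My with hC
    have hC1 : (1:ℝ) ≤ C := one_le_mul_of_one_le_of_one_le hMx1 hMy1
    -- the main estimate
    have main : ∀ k : ℕ, 1 ≤ k → berkSpec (x + y) ^ k ≤ C * (u + v) ^ k := by
      intro k hk
      calc berkSpec (x + y) ^ k ≤ ‖(x + y) ^ k‖ := pow_berkSpec_le _ hk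
        _ = ‖∑ i ∈ Finset.range (k + 1), x ^ i * y ^ (k - i) * (k.choose i : A)‖ := by
            rw [add_pow]
        _ ≤ ∑ i ∈ Finset.range (k + 1), ‖x ^ i * y ^ (k - i) * (k.choose i : A)‖ :=
            norm_sum_le _ _
        _ ≤ ∑ i ∈ Finset.range (k + 1), Mx * u ^ i * (My * v ^ (k - i)) * (k.choose i : ℝ) := by
            refine Finset.sum_le_sum fun i _ => ?_
            calc ‖x ^ i * y ^ (k - i) * (k.choose i : A)‖
                ≤ ‖x ^ i * y ^ (k - i)‖ * ‖(k.choose i : A)‖ := norm_mul_le _ _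
              _ ≤ ‖x ^ i‖ * ‖y ^ (k - i)‖ * ‖(k.choose i : A)‖ := by
                  gcongr
                  exact norm_mul_le _ _
              _ ≤ Mx * u ^ i * (My * v ^ (k - i)) * (k.choose i : ℝ) := by
                  have hcast : ‖(k.choose i : A)‖ ≤ (k.choose i : ℝ) := by
                    simpa using Nat.norm_cast_le (α := A) (k.choose i)
                  exact mul_le_mul (mul_le_mul (hMx i) (hMy (k - i)) (norm_nonneg _)
                    (by positivity)) hcast (norm_nonneg _) (by positivity)
        _ = C * (u + v) ^ k := by
            rw [add_pow]
            rw [Finset.mul_sum]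
            refine Finset.sum_congr rfl fun i _ => ?_
            ring
    -- conclude
    by_contra hcon
    push_neg at hcon
    have ht : 0 < u + v := by positivity
    have hrat : 1 < berkSpec (x + y) / (u + v) := (one_lt_div ht).mpr hcon
    obtain ⟨k, hkC⟩ := pow_unbounded_of_one_lt C hrat
    have hk1 : 1 ≤ k + 1 := Nat.le_add_left 1 k
    have hkC' : C < (berkSpec (x + y) / (u + v)) ^ (k + 1) :=
      lt_of_lt_of_le hkC (pow_le_pow_right₀ (le_of_lt hrat) (Nat.le_succ k))
    rw [div_pow, lt_div_iff₀ (by positivity)] at hkC'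
    exact absurd (main (k + 1) hk1) (by linarith)
  have := berk_aux_le_of_forall_pos
    (fun ε => (berkSpec x + ε) + (berkSpec y + ε)) (by fun_prop) key
  simpa using this
variable (A) in
/-- The set of bounded power-multiplicative seminorms. -/
private def BerkS : Set (A → ℝ) :=
  {f | f 0 = 0 ∧ f 1 = 1 ∧ (∀ x, 0 ≤ f x) ∧ (∀ x, f (-x) = f x) ∧
    (∀ x y, f (x + y) ≤ f x + f y) ∧ (∀ x y, f (x * y) ≤ f x * f y) ∧
    IsPowMul f ∧ (∀ x, f x ≤ ‖x‖)}

private lemma berkSpec_mem : berkSpec (A := A) ∈ BerkS A :=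
  ⟨berkSpec_zero, berkSpec_one, berkSpec_nonneg, berkSpec_neg, berkSpec_add_le,
    berkSpec_mul_le, berkSpec_isPowMul, berkSpec_le_norm⟩

private lemma berk_chain_inf (c : Set (A → ℝ)) (hc : IsChain (· ≤ ·) c)
    (hcS : c ⊆ BerkS A) {y : A → ℝ} (hy : y ∈ c) :
    ∃ h ∈ BerkS A, ∀ g ∈ c, h ≤ g := by
  haveI : Nonempty c := ⟨⟨y, hy⟩⟩
  set h : A → ℝ := fun x => ⨅ g : c, (g : A → ℝ) x with hh
  have hbdd : ∀ x : A, BddBelow (Set.range fun g : c => (g : A → ℝ) x) := by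
    intro x
    refine ⟨0, ?_⟩
    rintro r ⟨g, rfl⟩
    exact (hcS g.2).2.2.1 x
  have hle : ∀ g ∈ c, h ≤ g := fun g hg x => ciInf_le (hbdd x) ⟨g, hg⟩
  have hnonneg : ∀ x, 0 ≤ h x := fun x => le_ciInf fun g => (hcS g.2).2.2.1 x
  have heps : ∀ (x : A) (ε : ℝ), 0 < ε → ∃ g ∈ c, (g : A → ℝ) x < h x + ε := by
    intro x ε hε
    obtain ⟨g, hg⟩ := exists_lt_of_ciInf_lt (show h x < h x + ε by linarith)
    exact ⟨g, g.2, hg⟩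
  have hcomp : ∀ g₁ ∈ c, ∀ g₂ ∈ c, ∃ g ∈ c, g ≤ g₁ ∧ g ≤ g₂ := by
    intro g₁ hg₁ g₂ hg₂
    rcases eq_or_ne g₁ g₂ with rfl | hne
    · exact ⟨g₁, hg₁, le_rfl, le_rfl⟩
    · rcases hc hg₁ hg₂ hne with h12 | h21
      · exact ⟨g₁, hg₁, le_rfl, h12⟩
      · exact ⟨g₂, hg₂, h21, le_rfl⟩
  refine ⟨h, ⟨?_, ?_, hnonneg, ?_, ?_, ?_, ?_, ?_⟩, hle⟩
  · -- h 0 = 0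
    refine le_antisymm ?_ (hnonneg 0)
    have := hle y hy 0
    rw [(hcS hy).1] at this
    exact this
  · -- h 1 = 1
    have : (fun g : c => (g : A → ℝ) 1) = fun _ => (1 : ℝ) := by
      funext g
      exact (hcS g.2).2.1
    rw [hh]
    simp only [this]
    exact ciInf_const
  · -- neg
    intro x
    rw [hh]
    simp only
    congr 1
    funext g
    exact (hcS g.2).2.2.2.1 x
  · -- add
    intro x z
    refine le_of_forall_pos_le_add fun ε hε => ?_
    obtain ⟨g₁, hg₁, hg₁x⟩ := heps x (ε / 2) (by linarith)
    obtain ⟨g₂, hg₂, hg₂z⟩ := heps z (ε / 2) (by linarith)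
    obtain ⟨g, hg, hgle₁, hgle₂⟩ := hcomp g₁ hg₁ g₂ hg₂
    calc h (x + z) ≤ g (x + z) := hle g hg (x + z)
      _ ≤ g x + g z := (hcS hg).2.2.2.2.1 x z
      _ ≤ g₁ x + g₂ z := add_le_add (hgle₁ x) (hgle₂ z)
      _ ≤ h x + ε / 2 + (h z + ε / 2) := add_le_add (le_of_lt hg₁x) (le_of_lt hg₂z)
      _ = h x + h z + ε := by ring
  · -- mul
    intro x z
    have key : ∀ ε : ℝ, 0 < ε → h (x * z) ≤ (h x + ε) * (h z + ε) := by
      intro ε hε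
      obtain ⟨g₁, hg₁, hg₁x⟩ := heps x ε hε
      obtain ⟨g₂, hg₂, hg₂z⟩ := heps z ε hε
      obtain ⟨g, hg, hgle₁, hgle₂⟩ := hcomp g₁ hg₁ g₂ hg₂
      calc h (x * z) ≤ g (x * z) := hle g hg (x * z)
        _ ≤ g x * g z := (hcS hg).2.2.2.2.2.1 x z
        _ ≤ (h x + ε) * (h z + ε) := by
            refine mul_le_mul (le_of_lt (lt_of_le_of_lt (hgle₁ x) hg₁x))
              (le_of_lt (lt_of_le_of_lt (hgle₂ z) hg₂z)) ((hcS hg).2.2.1 z) ?_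
            have := hnonneg x; linarith
    have := berk_aux_le_of_forall_pos (fun ε => (h x + ε) * (h z + ε)) (by fun_prop) key
    simpa using this
  · -- pow mul
    intro a k hk
    refine le_antisymm ?_ ?_
    · have key : ∀ ε : ℝ, 0 < ε → h (a ^ k) ≤ (h a + ε) ^ k := by
        intro ε hε
        obtain ⟨g₁, hg₁, hg₁a⟩ := heps a ε hε
        calc h (a ^ k) ≤ g₁ (a ^ k) := hle g₁ hg₁ (a ^ k)
          _ = g₁ a ^ k := (hcS hg₁).2.2.2.2.2.2.1 a hk
          _ ≤ (h a + ε) ^ k := pow_le_pow_left₀ ((hcS hg₁).2.2.1 a) (le_of_lt hg₁a) k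
      have := berk_aux_le_of_forall_pos (fun ε => (h a + ε) ^ k) (by fun_prop) key
      simpa using this
    · refine le_ciInf fun g => ?_
      calc h a ^ k ≤ ((g : A → ℝ) a) ^ k :=
            pow_le_pow_left₀ (hnonneg a) (hle g g.2 a) k
        _ = (g : A → ℝ) (a ^ k) := ((hcS g.2).2.2.2.2.2.2.1 a hk).symm
  · -- bounded by norm
    intro x
    exact le_trans (hle y hy x) ((hcS hy).2.2.2.2.2.2.2 x)

private lemma berk_exists_minimal :
    ∃ f ∈ BerkS A, ∀ g ∈ BerkS A, g ≤ f → g = f := by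
  have key := zorn_le_nonempty₀ (α := (A → ℝ)ᵒᵈ)
    (OrderDual.ofDual ⁻¹' BerkS A) ?_ (OrderDual.toDual berkSpec) berkSpec_mem
  · obtain ⟨m, _, hmem, hmax⟩ := key
    refine ⟨OrderDual.ofDual m, hmem, fun g hg hgle => ?_⟩
    exact le_antisymm hgle (hmax (y := OrderDual.toDual g) hg hgle)
  · intro c hcsub hchain z hz
    have hch : IsChain (· ≤ ·) (OrderDual.ofDual '' c) := by
      rintro _ ⟨g₁, hg₁, rfl⟩ _ ⟨g₂, hg₂, rfl⟩ hne
      rcases hchain hg₁ hg₂ (fun e => hne (congrArg _ e)) with h12 | h21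
      · exact Or.inr h12
      · exact Or.inl h21
    have hsub : OrderDual.ofDual '' c ⊆ BerkS A := by
      rintro _ ⟨g, hg, rfl⟩
      exact hcsub hg
    obtain ⟨h, hhS, hhle⟩ := berk_chain_inf (OrderDual.ofDual '' c)
      hch hsub (Set.mem_image_of_mem _ hz)
    exact ⟨OrderDual.toDual h, hhS, fun g hg => hhle _ (Set.mem_image_of_mem _ hg)⟩
end Spec

/-- Let `A` be a commutative Banach ring (complete commutative normed ring with
`1 ≠ 0`, `‖1‖ = 1`, and submultiplicative norm). Then there exists at least one multiplicative
seminorm `f` on `A` with `f a ≤ ‖a‖` for all `a`; i.e. the Berkovich spectrum `ℳ(A)` of bounded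
multiplicative seminorms on `A` is nonempty. -/
theorem berkovich_spectrum_nonempty
    {A : Type*} [NormedCommRing A] [NormOneClass A] [Nontrivial A] [CompleteSpace A] :
    ∃ f : A → ℝ,
      f 0 = 0 ∧ f 1 = 1 ∧
      (∀ a b : A, f (a * b) = f a * f b) ∧
      (∀ a b : A, f (a + b) ≤ f a + f b) ∧
      (∀ a : A, f a ≤ ‖a‖) := by
  obtain ⟨f, ⟨h0, h1, hnn, hneg, hadd, hmul, hpm, hbd⟩, hmin⟩ := berk_exists_minimal (A := A)
  refine ⟨f, h0, h1, ?_, hadd, hbd⟩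
  intro a b
  by_cases ha : f a = 0
  · refine le_antisymm ?_ ?_
    · refine le_trans (hmul a b) ?_
      rw [ha, zero_mul]
    · rw [ha, zero_mul]
      exact hnn _
  · set F : RingSeminorm A := ⟨⟨f, h0, hadd, hneg⟩, hmul⟩ with hF
    have hf1 : F 1 ≤ 1 := le_of_eq h1
    have hc : F a ≠ 0 := ha
    have hpm' : IsPowMul ⇑F := hpm
    set G := seminormFromConst hf1 hc hpm' with hG
    have hGmem : ⇑G ∈ BerkS A :=
      ⟨map_zero G, seminormFromConst_one hf1 hc hpm', fun x => apply_nonneg G x,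
        fun x => map_neg_eq_map G x, fun x y => map_add_le_add G x y,
        fun x y => map_mul_le_mul G x y, seminormFromConst_isPowMul hf1 hc hpm',
        fun x => le_trans (seminormFromConst_le_seminorm hf1 hc hpm' x) (hbd x)⟩
    have hle : ⇑G ≤ f := fun x => seminormFromConst_le_seminorm hf1 hc hpm' x
    have heq : ⇑G = f := hmin _ hGmem hle
    calc f (a * b) = G (a * b) := (congrFun heq _).symm
      _ = G a * G b := seminormFromConst_const_mul hf1 hc hpm' b
      _ = f a * f b := by rw [congrFun heq a, congrFun heq b]
end

section
/- Let A be a commutative Banach ring, i.e. a complete commutative normed ring with 1 ≠ 0, ‖1‖ = 1, and submultiplicative norm. The set ℳ(A) = { f : A → ℝ | f is a multiplicative seminorm and f(a) ≤ ‖a‖ for all a ∈ A }, viewed as a subset of the product space ℝ^A equipped with the topology of pointwise convergence, is compact. -/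
/-- Let `A` be a commutative Banach ring. The Berkovich spectrum
`ℳ(A) = { f : A → ℝ | f is a multiplicative seminorm and f a ≤ ‖a‖ for all a }`,
viewed as a subset of the product space `A → ℝ` with the topology of pointwise
convergence, is compact. -/
theorem berkovich_spectrum_isCompact
    {A : Type*} [NormedCommRing A] [NormOneClass A] [Nontrivial A] [CompleteSpace A] :
    IsCompact {f : A → ℝ |
      f 0 = 0 ∧ f 1 = 1 ∧
      (∀ a b : A, f (a * b) = f a * f b) ∧
      (∀ a b : A, f (a + b) ≤ f a + f b) ∧
      (∀ a : A, f a ≤ ‖a‖)} := by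
  have hK : IsCompact (Set.pi Set.univ fun a : A => Set.Icc (-‖a‖) ‖a‖) :=
    isCompact_univ_pi fun a => isCompact_Icc
  apply hK.of_isClosed_subset
  · simp only [Set.setOf_and]
    refine IsClosed.inter (isClosed_eq (continuous_apply 0) continuous_const) ?_
    refine IsClosed.inter (isClosed_eq (continuous_apply 1) continuous_const) ?_
    refine IsClosed.inter ?_ (IsClosed.inter ?_ ?_)
    · simp only [Set.setOf_forall]
      exact isClosed_iInter fun a => isClosed_iInter fun b =>
        isClosed_eq (continuous_apply _) ((continuous_apply a).mul (continuous_apply b))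
    · simp only [Set.setOf_forall]
      exact isClosed_iInter fun a => isClosed_iInter fun b =>
        isClosed_le (continuous_apply _) ((continuous_apply a).add (continuous_apply b))
    · simp only [Set.setOf_forall]
      exact isClosed_iInter fun a =>
        isClosed_le (continuous_apply a) continuous_const
  · rintro f ⟨h0, h1, hmul, hadd, hle⟩ a _
    refine ⟨?_, hle a⟩
    have h := hadd a (-a)
    rw [add_neg_cancel, h0] at h
    have hna : f (-a) ≤ ‖a‖ := by simpa using hle (-a)
    linarith
end

section
/- Let A be a commutative normed ring with ‖1‖ = 1 whose norm is submultiplicative and nonarchimedean, i.e. ‖a+b‖ ≤ max(‖a‖, ‖b‖) for all a, b ∈ A. If f is a multiplicative seminorm on A with f(a) ≤ ‖a‖ for all a ∈ A, then f is itself nonarchimedean: f(a+b) ≤ max(f(a), f(b)) for all a, b ∈ A. -/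
/-- Let `A` be a commutative normed ring with `‖1‖ = 1` whose norm is
submultiplicative and nonarchimedean (`‖a + b‖ ≤ max ‖a‖ ‖b‖`). If `f` is a multiplicative
seminorm on `A` with `f a ≤ ‖a‖` for all `a`, then `f` is itself nonarchimedean:
`f (a + b) ≤ max (f a) (f b)` for all `a b`. -/
theorem multiplicative_seminorm_nonarchimedean
    {A : Type*} [NormedCommRing A] [NormOneClass A]
    (hna : ∀ a b : A, ‖a + b‖ ≤ max ‖a‖ ‖b‖)
    (f : A → ℝ)
    (hf0 : f 0 = 0) (hf1 : f 1 = 1)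
    (hfmul : ∀ a b : A, f (a * b) = f a * f b)
    (hfadd : ∀ a b : A, f (a + b) ≤ f a + f b)
    (hbd : ∀ a : A, f a ≤ ‖a‖) :
    ∀ a b : A, f (a + b) ≤ max (f a) (f b) := by
  -- the norm of any natural number is at most 1
  have hnorm_nat : ∀ n : ℕ, ‖(n : A)‖ ≤ 1 := by
    intro n
    induction n with
    | zero => simp
    | succ k ih =>
      push_cast
      calc ‖(k : A) + 1‖ ≤ max ‖(k : A)‖ ‖(1 : A)‖ := hna _ _
        _ ≤ 1 := by simp [ih]
  -- f is nonnegative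
  have hf_nonneg : ∀ a : A, 0 ≤ f a := by
    intro a
    by_contra h
    push_neg at h
    have h2le : f (2 : A) ≤ 1 := (hbd _).trans (by exact_mod_cast hnorm_nat 2)
    have h2 : f (2 : A) * f a ≤ 2 * f a := by
      calc f (2 : A) * f a = f ((2 : A) * a) := (hfmul _ _).symm
        _ = f (a + a) := by rw [two_mul]
        _ ≤ f a + f a := hfadd _ _
        _ = 2 * f a := by ring
    nlinarith [mul_pos (by linarith : (0:ℝ) < 2 - f (2 : A)) (by linarith : (0:ℝ) < -f a)]
  -- f of a natural number is at most 1
  have hf_nat : ∀ n : ℕ, f (n : A) ≤ 1 := fun n => (hbd _).trans (hnorm_nat n)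
  -- f of a power
  have hf_pow : ∀ (a : A) (n : ℕ), f (a ^ n) = f a ^ n := by
    intro a n
    induction n with
    | zero => simpa using hf1
    | succ k ih => rw [pow_succ, pow_succ, hfmul, ih]
  -- f of a finite sum
  have hf_sum : ∀ (n : ℕ) (g : ℕ → A),
      f (∑ k ∈ Finset.range n, g k) ≤ ∑ k ∈ Finset.range n, f (g k) := by
    intro n g
    induction n with
    | zero => simp [hf0]
    | succ k ih =>
      rw [Finset.sum_range_succ, Finset.sum_range_succ]
      exact (hfadd _ _).trans (by linarith)
  intro a b
  set M : ℝ := max (f a) (f b) with hM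
  have hM0 : 0 ≤ M := le_trans (hf_nonneg a) (le_max_left _ _)
  -- key estimate
  have key : ∀ n : ℕ, f (a + b) ^ n ≤ (n + 1 : ℝ) * M ^ n := by
    intro n
    rw [← hf_pow, add_pow]
    calc f (∑ k ∈ Finset.range (n + 1), a ^ k * b ^ (n - k) * (n.choose k : A))
        ≤ ∑ k ∈ Finset.range (n + 1), f (a ^ k * b ^ (n - k) * (n.choose k : A)) :=
          hf_sum _ _
      _ ≤ ∑ k ∈ Finset.range (n + 1), M ^ n := by
          apply Finset.sum_le_sum
          intro k hk
          rw [Finset.mem_range] at hk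
          have hkn : k ≤ n := Nat.lt_succ_iff.mp hk
          have : f (a ^ k * b ^ (n - k) * (n.choose k : A))
              = f a ^ k * f b ^ (n - k) * f (n.choose k : A) := by
            rw [hfmul, hfmul, hf_pow, hf_pow]
          rw [this]
          have h1 : f a ^ k ≤ M ^ k :=
            pow_le_pow_left₀ (hf_nonneg a) (le_max_left _ _) k
          have h2 : f b ^ (n - k) ≤ M ^ (n - k) :=
            pow_le_pow_left₀ (hf_nonneg b) (le_max_right _ _) (n - k)
          calc f a ^ k * f b ^ (n - k) * f (n.choose k : A)
              ≤ M ^ k * M ^ (n - k) * 1 := by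
                apply mul_le_mul
                · exact mul_le_mul h1 h2 (pow_nonneg (hf_nonneg b) _) (pow_nonneg hM0 _)
                · exact hf_nat _
                · exact hf_nonneg _
                · positivity
            _ = M ^ n := by
                rw [mul_one, ← pow_add, Nat.add_sub_cancel' hkn]
      _ = (n + 1 : ℝ) * M ^ n := by
          rw [Finset.sum_const, Finset.card_range]
          push_cast
          ring
  -- conclude
  by_contra h
  push_neg at h
  rcases eq_or_lt_of_le hM0 with hMz | hMpos
  · have := key 1
    simp [← hMz] at this
    have := hf_nonneg (a + b)
    nlinarith
  · have hlt : 1 < f (a + b) / M := (one_lt_div hMpos).mpr h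
    obtain ⟨m, hm⟩ := Real.exists_natCast_add_one_lt_pow_of_one_lt hlt
    have hkey := key m
    rw [div_pow] at hm
    have hMn : 0 < M ^ m := pow_pos hMpos m
    have : (m + 1 : ℝ) * M ^ m < f (a + b) ^ m := by
      rw [lt_div_iff₀ hMn] at hm
      linarith
    linarith
end

section
/- Let K be an algebraically closed nonarchimedean normed field whose norm is nontrivial. Then for every polynomial p ∈ K[T] and every R > 0, the supremum of ‖p(z)‖ over all z ∈ K with ‖z‖ ≤ R equals the Gauss norm ‖p‖_R; that is, sup { ‖p(z)‖ : z ∈ K, ‖z‖ ≤ R } = max_j (‖a_j‖ · R^j) where p = ∑_j a_j T^j. -/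
/-! The bound `‖p(z)‖ ≤ ‖p‖_R` is the ultrametric inequality. Conversely, let `j` be
the least index with `‖a_j‖ R^j = ‖p‖_R`. For radii `r < R` close to `R` the term `‖a_j‖ r^j`
strictly dominates all others (lower terms by continuity, higher ones because they decay faster
as `r` decreases), so `‖p(c)‖ = ‖a_j‖ ‖c‖^j` whenever `‖c‖ = r`. Since `K` is algebraically
closed with nontrivial norm, its norms are dense in `(0, ∞)`, so such `c` exist with `‖c‖`
arbitrarily close to `R`. -/

open Polynomial

/-- The Gauss norm of radius `R` on `K[T]`: for `p = ∑ a_j T^j`,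
`‖p‖_R = max_j ‖a_j‖ * R ^ j` (and `‖0‖_R = 0`). -/
noncomputable def gaussNorm {K : Type*} [NormedField K] (R : ℝ) (p : K[X]) : ℝ :=
  ⨆ j : ℕ, ‖p.coeff j‖ * R ^ j

open Filter Topology Set

lemma IsUltrametricDist.norm_sum_eq_of_forall_norm_lt {M ι : Type*}
    [SeminormedAddCommGroup M] [IsUltrametricDist M] {s : Finset ι} {f : ι → M} {j : ι}
    (hj : j ∈ s) (h : ∀ i ∈ s, i ≠ j → ‖f i‖ < ‖f j‖) : ‖∑ i ∈ s, f i‖ = ‖f j‖ := by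
  classical
  have : Nonempty ι := ⟨j⟩
  rw [← Finset.add_sum_erase s f hj]
  rcases (s.erase j).eq_empty_or_nonempty with he | hne
  · simp [he]
  obtain ⟨i, hi, hle⟩ := exists_norm_finsetSum_le (s.erase j) f
  have hlt : ‖∑ i ∈ s.erase j, f i‖ < ‖f j‖ :=
    hle.trans_lt (h i (Finset.mem_of_mem_erase (hi hne)) (Finset.ne_of_mem_erase (hi hne)))
  rw [IsUltrametricDist.norm_add_eq_max_of_norm_ne_norm hlt.ne', max_eq_left hlt.le]

section NormDensity

variable {K : Type*} [NormedField K] [IsAlgClosed K]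

lemma exists_one_lt_norm_lt {u : K} (hu : 1 < ‖u‖) {t : ℝ} (ht : 1 < t) :
    ∃ y : K, 1 < ‖y‖ ∧ ‖y‖ < t := by
  obtain ⟨n, hn⟩ := pow_unbounded_of_one_lt ‖u‖ ht
  obtain ⟨y, hy⟩ := IsAlgClosed.exists_pow_nat_eq u (Nat.succ_pos n)
  have hpow : ‖y‖ ^ (n + 1) = ‖u‖ := by rw [← norm_pow, hy]
  refine ⟨y, (one_lt_pow_iff_of_nonneg (norm_nonneg y) n.succ_ne_zero).1 (hpow ▸ hu), ?_⟩
  refine lt_of_pow_lt_pow_left₀ (n + 1) (by positivity) ?_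
  rw [hpow]
  exact hn.trans_le (pow_le_pow_right₀ ht.le n.le_succ)

lemma exists_norm_mem_Ioo {u : K} (hu : 1 < ‖u‖) {a b : ℝ} (ha : 0 < a) (hab : a < b) :
    ∃ c : K, ‖c‖ ∈ Ioo a b := by
  obtain ⟨y, hy1, hyb⟩ := exists_one_lt_norm_lt hu ((one_lt_div ha).2 hab)
  obtain ⟨k, hk, hak⟩ := exists_mem_Ico_zpow ha hy1
  refine ⟨y ^ (k + 1), by rwa [norm_zpow], ?_⟩
  rw [norm_zpow, zpow_add_one₀ (by positivity)]
  calc ‖y‖ ^ k * ‖y‖ ≤ a * ‖y‖ := by gcongr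
    _ < a * (b / a) := by gcongr
    _ = b := by field_simp

lemma frequently_exists_norm_eq_nhdsLT (hnt : ∃ x : K, x ≠ 0 ∧ ‖x‖ ≠ 1) {R : ℝ} (hR : 0 < R) :
    ∃ᶠ r in 𝓝[<] R, ∃ c : K, ‖c‖ = r := by
  obtain ⟨u, hu⟩ : ∃ u : K, 1 < ‖u‖ := by
    obtain ⟨x, hx0, hx1⟩ := hnt
    rcases hx1.lt_or_gt with h | h
    · exact ⟨x⁻¹, by rw [norm_inv]; exact (one_lt_inv₀ (norm_pos_iff.2 hx0)).2 h⟩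
    · exact ⟨x, h⟩
  rw [frequently_iff]
  intro U hU
  obtain ⟨l, hl, hsub⟩ := mem_nhdsLT_iff_exists_Ioo_subset.1 hU
  obtain ⟨c, hc⟩ := exists_norm_mem_Ioo hu (a := max l (R / 2)) (by positivity)
    (max_lt hl (half_lt_self hR))
  exact ⟨‖c‖, hsub ⟨(le_max_left _ _).trans_lt hc.1, hc.2⟩, c, rfl⟩

end NormDensity

lemma mul_pow_lt_mul_pow_of_lt_radius {a b r R : ℝ} {i j : ℕ} (hr : 0 < r) (hrR : r < R)
    (hji : j < i) (hb : 0 < b * R ^ j) (hab : a * R ^ i ≤ b * R ^ j) :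
    a * r ^ i < b * r ^ j := by
  have hR : 0 < R := hr.trans hrR
  calc a * r ^ i = (r / R) ^ i * (a * R ^ i) := by rw [div_pow]; field_simp
    _ ≤ (r / R) ^ i * (b * R ^ j) := by gcongr
    _ < (r / R) ^ j * (b * R ^ j) :=
      mul_lt_mul_of_pos_right
        (pow_lt_pow_right_of_lt_one₀ (div_pos hr hR) ((div_lt_one hR).2 hrR) hji) hb
    _ = b * r ^ j := by rw [div_pow]; field_simp

section GaussNorm

variable {K : Type*} [NormedField K]

lemma gaussNorm_eq_gaussNorm_toRingSeminorm (p : K[X]) {R : ℝ} (hR : 0 ≤ R) :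
    gaussNorm R p = p.gaussNorm (SeminormedRing.toRingSeminorm K) R := by
  have hle := p.le_gaussNorm (SeminormedRing.toRingSeminorm K) hR
  refine le_antisymm (ciSup_le hle) ?_
  obtain ⟨j, hj⟩ := p.exists_eq_gaussNorm (SeminormedRing.toRingSeminorm K) R
  exact hj ▸ le_ciSup ⟨_, forall_mem_range.2 hle⟩ j

lemma norm_eval_le_gaussNorm [IsUltrametricDist K] (p : K[X]) {R : ℝ} {z : K} (hz : ‖z‖ ≤ R) :
    ‖p.eval z‖ ≤ p.gaussNorm (SeminormedRing.toRingSeminorm K) R := by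
  have hR : 0 ≤ R := (norm_nonneg z).trans hz
  rw [eval_eq_sum_range]
  refine IsUltrametricDist.norm_sum_le_of_forall_le_of_nonneg (p.gaussNorm_nonneg _ hR)
    fun j _ ↦ ?_
  rw [norm_mul, norm_pow]
  exact (by gcongr : ‖p.coeff j‖ * ‖z‖ ^ j ≤ ‖p.coeff j‖ * R ^ j).trans
    (p.le_gaussNorm (SeminormedRing.toRingSeminorm K) hR j)

lemma norm_eval_eq_of_forall_norm_lt [IsUltrametricDist K] {p : K[X]} {c : K} {j : ℕ}
    (h : ∀ i ≠ j, ‖p.coeff i‖ * ‖c‖ ^ i < ‖p.coeff j‖ * ‖c‖ ^ j) :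
    ‖p.eval c‖ = ‖p.coeff j‖ * ‖c‖ ^ j := by
  rw [eval_eq_sum_range' (n := max p.natDegree j + 1) (by omega),
    IsUltrametricDist.norm_sum_eq_of_forall_norm_lt (j := j) (by simp),
    norm_mul, norm_pow]
  intro i _ hi
  simpa only [norm_mul, norm_pow] using h i hi

lemma exists_eventually_norm_coeff_mul_pow_lt {p : K[X]} (hp : p ≠ 0) {R : ℝ} (hR : 0 < R) :
    ∃ j, ‖p.coeff j‖ * R ^ j = p.gaussNorm (SeminormedRing.toRingSeminorm K) R ∧
      ∀ᶠ r in 𝓝[<] R, ∀ i ≠ j, ‖p.coeff i‖ * r ^ i < ‖p.coeff j‖ * r ^ j := by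
  obtain ⟨j, hj, hlt⟩ := p.exists_min_eq_gaussNorm (SeminormedRing.toRingSeminorm K) hR.le
  simp only [SeminormedRing.toRingSeminorm_apply] at hj hlt
  have hpos : 0 < ‖p.coeff j‖ * R ^ j := by
    rw [← hj]
    exact (p.gaussNorm_nonneg _ hR.le).lt_of_ne'
      ((p.gaussNorm_eq_zero_iff _ (by simp) hR).not.2 hp)
  have hlow : ∀ᶠ r in 𝓝 R, ∀ i ∈ Finset.range j, ‖p.coeff i‖ * r ^ i < ‖p.coeff j‖ * r ^ j := by
    refine (eventually_all_finset _).2 fun i hi ↦ ?_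
    refine (Continuous.continuousAt (by fun_prop)).eventually_lt
      (Continuous.continuousAt (by fun_prop)) ?_
    exact hj ▸ hlt i (Finset.mem_range.1 hi)
  refine ⟨j, hj.symm, ?_⟩
  filter_upwards [nhdsWithin_le_nhds hlow, Ioo_mem_nhdsLT hR] with r hr ⟨hr0, hrR⟩ i hi
  rcases hi.lt_or_gt with h | h
  · exact hr i (Finset.mem_range.2 h)
  · exact mul_pow_lt_mul_pow_of_lt_radius hr0 hrR h hpos
      (hj ▸ p.le_gaussNorm (SeminormedRing.toRingSeminorm K) hR.le i)

end GaussNorm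

/-- Let `K` be an algebraically closed nonarchimedean normed field with
nontrivial norm. Then for every `p ∈ K[T]` and every `R > 0`, the supremum of `‖p(z)‖` over
`z ∈ K` with `‖z‖ ≤ R` equals the Gauss norm `‖p‖_R`. -/
theorem sup_eval_closedBall_eq_gaussNorm
    {K : Type*} [NormedField K] [IsAlgClosed K]
    (hna : ∀ a b : K, ‖a + b‖ ≤ max ‖a‖ ‖b‖)
    (hnt : ∃ x : K, x ≠ 0 ∧ ‖x‖ ≠ 1)
    (p : K[X]) (R : ℝ) (hR : 0 < R) :
    sSup {y : ℝ | ∃ z : K, ‖z‖ ≤ R ∧ y = ‖p.eval z‖} = gaussNorm R p := by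
  have := IsUltrametricDist.isUltrametricDist_of_forall_norm_add_le_max_norm hna
  rw [gaussNorm_eq_gaussNorm_toRingSeminorm p hR.le]
  set S := {y : ℝ | ∃ z : K, ‖z‖ ≤ R ∧ y = ‖p.eval z‖}
  have hS : ∀ y ∈ S, y ≤ p.gaussNorm (SeminormedRing.toRingSeminorm K) R := by
    rintro _ ⟨z, hz, rfl⟩
    exact norm_eval_le_gaussNorm p hz
  have heval_zero : ‖p.eval 0‖ ∈ S := ⟨0, by simpa using hR.le, rfl⟩
  refine le_antisymm (csSup_le ⟨_, heval_zero⟩ hS) ?_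
  rcases eq_or_ne p 0 with rfl | hp
  · exact (gaussNorm_zero _ R).trans_le (le_csSup_of_le ⟨_, hS⟩ heval_zero (norm_nonneg _))
  obtain ⟨j, hj, hdom⟩ := exists_eventually_norm_coeff_mul_pow_lt hp hR
  refine le_of_tendsto_of_frequently (f := fun r ↦ ‖p.coeff j‖ * r ^ j) (x := 𝓝[<] R) ?_ ?_
  · exact hj ▸ (Continuous.tendsto (by fun_prop) R).mono_left nhdsWithin_le_nhds
  · refine ((frequently_exists_norm_eq_nhdsLT hnt hR).and_eventually
      (hdom.and self_mem_nhdsWithin)).mono ?_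
    rintro _ ⟨⟨c, rfl⟩, hdom, hcR⟩
    rw [← norm_eval_eq_of_forall_norm_lt hdom]
    exact le_csSup ⟨_, hS⟩ ⟨c, hcR.le, rfl⟩
end

section
/- Let f ∈ ℤ[X] be a polynomial of degree d ≥ 2, acting on ℚ by evaluation, and let fⁿ denote its n-fold iterate. Then for every z ∈ ℚ, the limit ĥ_f(z) := lim_{n→∞} h(fⁿ(z)) / dⁿ exists (as a real number), where h is the naive height on ℚ. -/
/-- The naive height on `ℚ`: for `q = a/b` in lowest terms with `b ≥ 1`,
`h(q) = log (max |a| b)`. -/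
noncomputable def naiveHeight (q : ℚ) : ℝ :=
  Real.log (max (|q.num| : ℝ) (q.den : ℝ))

namespace CallSilvermanAux


open Polynomial Finset

lemma binom_aux (x y : ℤ) (n : ℕ) : ∃ A : ℤ, (x + y) ^ n = x * A + y ^ n := by
  induction n with
  | zero => exact ⟨0, by ring⟩
  | succ n ih =>
    obtain ⟨A, hA⟩ := ih
    exact ⟨A * (x + y) + y ^ n, by rw [pow_succ, hA]; ring⟩

set_option maxHeartbeats 1600000 in
lemma core (f : Polynomial ℤ) (hd : 2 ≤ f.natDegree) :
    ∃ C₁ : ℤ, 1 ≤ C₁ ∧ ∀ q : ℚ,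
      max |(aeval q f).num| ((aeval q f).den : ℤ)
          ≤ C₁ * (max |q.num| (q.den : ℤ)) ^ f.natDegree ∧
      (max |q.num| (q.den : ℤ)) ^ f.natDegree
          ≤ C₁ * max |(aeval q f).num| ((aeval q f).den : ℤ) := by
  have hf0 : f ≠ 0 := fun h => by simp [h] at hd
  set d := f.natDegree with hd_def
  set S : ℤ := ∑ i ∈ range (d + 1), |f.coeff i| with hS_def
  have hcd0 : f.coeff d ≠ 0 := by
    have := Polynomial.leadingCoeff_ne_zero.mpr hf0
    rwa [Polynomial.leadingCoeff] at this
  have hcd1 : 1 ≤ |f.coeff d| := Int.one_le_abs (by exact_mod_cast hcd0)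
  have hScd : |f.coeff d| ≤ S := by
    apply Finset.single_le_sum (f := fun i => |f.coeff i|) (fun i _ => abs_nonneg _)
    exact self_mem_range_succ d
  have hS1 : 1 ≤ S := hcd1.trans hScd
  refine ⟨(2 * S) ^ d * S ^ d, ?_, ?_⟩
  · have h1 : (1:ℤ) ≤ (2*S)^d := one_le_pow₀ (by linarith)
    have h2 : (1:ℤ) ≤ S^d := one_le_pow₀ hS1
    nlinarith
  intro q
  set a : ℤ := q.num with ha_def
  set b : ℤ := (q.den : ℤ) with hb_def
  set r : ℚ := aeval q f with hr_def
  set N : ℤ := ∑ i ∈ range (d + 1), f.coeff i * a ^ i * b ^ (d - i) with hN_def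
  have hb : (0:ℤ) < b := by rw [hb_def]; exact_mod_cast q.pos
  -- Step A : r * b^d = N in ℚ
  have h1 : (r:ℚ) = ∑ i ∈ range (d+1), (f.coeff i : ℚ) * q ^ i := by
    rw [hr_def, show (aeval q f : ℚ) = (f.map (Int.castRingHom ℚ)).eval q from by
      rw [aeval_def, eval_map]; rfl,
      Polynomial.eval_eq_sum_range'
        (lt_of_le_of_lt (natDegree_map_le (p := f)) (Nat.lt_succ_self d))]
    simp [Polynomial.coeff_map]
  have hqb : (q : ℚ) * (b:ℚ) = (a:ℚ) := by
    rw [hb_def, ha_def]; push_cast; exact q.mul_den_eq_num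
  have hrN : r * (b:ℚ) ^ d = (N:ℚ) := by
    rw [h1, Finset.sum_mul, hN_def]
    push_cast
    refine Finset.sum_congr rfl fun i hi => ?_
    have hile : i ≤ d := Nat.lt_succ_iff.mp (Finset.mem_range.mp hi)
    have hsplit : (b:ℚ)^d = (b:ℚ)^i * (b:ℚ)^(d-i) := by
      rw [← pow_add, Nat.add_sub_cancel' hile]
    have hpow : q^i * (b:ℚ)^i = (a:ℚ)^i := by rw [← mul_pow, hqb]
    calc (f.coeff i : ℚ) * q^i * (b:ℚ)^d
        = (f.coeff i : ℚ) * (q^i * (b:ℚ)^i) * (b:ℚ)^(d-i) := by rw [hsplit]; ring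
      _ = (f.coeff i : ℚ) * (a:ℚ)^i * (b:ℚ)^(d-i) := by rw [hpow]
  -- Step B : integer relations
  have hden0 : (0:ℤ) < (r.den : ℤ) := by exact_mod_cast r.pos
  have hmain : r.num * b ^ d = N * (r.den : ℤ) := by
    have h3 : ((r.num : ℚ)) * (b:ℚ) ^ d = (N:ℚ) * (r.den:ℚ) := by
      rw [show (r.num : ℚ) = r * (r.den:ℚ) from (r.mul_den_eq_num).symm,
        mul_right_comm, hrN]
    exact_mod_cast h3
  have hcopr : IsCoprime ((r.den:ℤ)) r.num := by
    rw [Int.isCoprime_iff_gcd_eq_one]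
    simpa [Int.gcd, Nat.coprime_comm] using r.reduced
  have hdvd : (r.den : ℤ) ∣ b ^ d := by
    refine hcopr.dvd_of_dvd_mul_right ?_
    exact ⟨N, by linarith [hmain]⟩
  set g : ℤ := b ^ d / (r.den : ℤ) with hg_def
  have hg : g * (r.den : ℤ) = b ^ d := Int.ediv_mul_cancel hdvd
  have hgpos : 0 < g := by
    rcases lt_or_ge 0 g with h | h
    · exact h
    · exfalso
      have h5 : 0 < g * (r.den:ℤ) := hg ▸ pow_pos hb d
      nlinarith
  have hNg : r.num * g = N := by
    have h6 : (r.num * g) * (r.den:ℤ) = N * (r.den:ℤ) := by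
      rw [mul_assoc, hg]; exact hmain
    exact mul_right_cancel₀ hden0.ne' h6
  -- Step C : g divides (leading coeff)^d
  set M : ℤ := ∑ i ∈ range d, f.coeff i * a ^ i * b ^ (d - 1 - i) with hM_def
  have hNM : N = f.coeff d * a ^ d + b * M := by
    rw [hN_def, Finset.sum_range_succ, Nat.sub_self, pow_zero, mul_one, add_comm,
      hM_def, Finset.mul_sum]
    congr 1
    refine Finset.sum_congr rfl fun i hi => ?_
    have hi' : i < d := mem_range.mp hi
    have he : d - i = (d - 1 - i) + 1 := by omega
    rw [he, pow_succ]
    ring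
  have hgb : g ∣ b ^ d := ⟨(r.den:ℤ), hg.symm⟩
  have hgN : g ∣ N := Dvd.intro_left _ hNg
  have hgc : g ∣ (f.coeff d) ^ d := by
    obtain ⟨A, hA⟩ := binom_aux N (-(b * M)) d
    have h7 : g ∣ (f.coeff d) ^ d * a ^ (d * d) := by
      have he : (f.coeff d) ^ d * a ^ (d * d) = N * A + (-(b * M)) ^ d := by
        rw [← hA, pow_mul, ← mul_pow]
        congr 1
        rw [hNM]; ring
      rw [he]
      refine dvd_add (hgN.mul_right A) ?_
      rw [neg_pow]
      exact Dvd.dvd.mul_left (hgb.trans (pow_dvd_pow_of_dvd (dvd_mul_right b M) d)) _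
    have hab : IsCoprime a b := by
      rw [Int.isCoprime_iff_gcd_eq_one]
      simpa [ha_def, hb_def, Int.gcd] using q.reduced
    have h8 : IsCoprime g (a ^ (d * d)) :=
      ((hab.pow_right.of_isCoprime_of_dvd_right hgb).symm).pow_right
    exact h8.dvd_of_dvd_mul_right h7
  -- Step D : bounds
  set H : ℤ := max |a| b with hH_def
  set Hf : ℤ := max |r.num| ((r.den):ℤ) with hHf_def
  have hb1 : (1:ℤ) ≤ b := hb
  have hH1 : (1:ℤ) ≤ H := le_max_of_le_right hb1
  have hH0 : (0:ℤ) ≤ H := by linarith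
  have haH : |a| ≤ H := le_max_left _ _
  have hbH : b ≤ H := le_max_right _ _
  have hterm : ∀ i ∈ range (d+1), |a| ^ i * b ^ (d-i) ≤ H ^ d := by
    intro i hi
    have hile : i ≤ d := Nat.lt_succ_iff.mp (Finset.mem_range.mp hi)
    calc |a| ^ i * b ^ (d-i) ≤ H ^ i * H ^ (d-i) := by
          exact mul_le_mul (pow_le_pow_left₀ (abs_nonneg a) haH i)
            (pow_le_pow_left₀ hb.le hbH _) (by positivity) (by positivity)
      _ = H ^ d := by rw [← pow_add, Nat.add_sub_cancel' hile]
  have hNle : |N| ≤ S * H ^ d := by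
    rw [hN_def]
    calc |∑ i ∈ range (d + 1), f.coeff i * a ^ i * b ^ (d - i)|
        ≤ ∑ i ∈ range (d + 1), |f.coeff i * a ^ i * b ^ (d - i)| :=
          Finset.abs_sum_le_sum_abs _ _
      _ ≤ ∑ i ∈ range (d + 1), |f.coeff i| * H ^ d := by
          refine Finset.sum_le_sum fun i hi => ?_
          rw [abs_mul, abs_mul, abs_pow, abs_pow, abs_of_pos hb, mul_assoc]
          exact mul_le_mul_of_nonneg_left (hterm i hi) (abs_nonneg _)
      _ = S * H ^ d := by rw [← Finset.sum_mul, hS_def]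
  have hg1 : (1:ℤ) ≤ g := hgpos
  have hNabs : |N| = |r.num| * g := by rw [← hNg, abs_mul, abs_of_pos hgpos]
  have hnumle : |r.num| ≤ |N| := by nlinarith [abs_nonneg r.num]
  have hdenle : (r.den:ℤ) ≤ b ^ d := by nlinarith
  have hbdH : b ^ d ≤ H ^ d := pow_le_pow_left₀ hb.le hbH d
  have hgS : g ≤ S ^ d := by
    have h9 : g ≤ |f.coeff d ^ d| := Int.le_of_dvd (abs_pos.mpr (pow_ne_zero d hcd0))
      ((dvd_abs _ _).mpr hgc)
    rw [abs_pow] at h9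
    exact h9.trans (pow_le_pow_left₀ (abs_nonneg _) hScd d)
  have hbden : b ^ d ≤ S ^ d * (r.den:ℤ) := by
    rw [← hg]; exact mul_le_mul_of_nonneg_right hgS hden0.le
  have h2S1 : (1:ℤ) ≤ (2*S)^d := one_le_pow₀ (by linarith)
  have hSd1 : (1:ℤ) ≤ S^d := one_le_pow₀ hS1
  have hnumHf : |r.num| ≤ Hf := le_max_left _ _
  have hdenHf : (r.den:ℤ) ≤ Hf := le_max_right _ _
  have hHf0 : (0:ℤ) ≤ Hf := le_trans (abs_nonneg _) hnumHf
  have hC1' : (1:ℤ) ≤ (2*S)^d * S^d := by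
    calc (1:ℤ) = 1 * 1 := by ring
      _ ≤ (2*S)^d * S^d := mul_le_mul h2S1 hSd1 one_pos.le (by positivity)
  have hSle : S ≤ (2*S)^d * S^d := by
    calc S ≤ S^d := le_self_pow₀ hS1 (by omega)
      _ = 1 * S^d := (one_mul _).symm
      _ ≤ (2*S)^d * S^d := mul_le_mul_of_nonneg_right h2S1 (by positivity)
  constructor
  · -- upper bound
    have hHd0 : (0:ℤ) ≤ H ^ d := by positivity
    refine max_le ?_ ?_
    · calc |r.num| ≤ S * H ^ d := hnumle.trans hNle
        _ ≤ (2*S)^d * S^d * H^d := mul_le_mul_of_nonneg_right hSle hHd0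
    · calc ((r.den):ℤ) ≤ H ^ d := hdenle.trans hbdH
        _ ≤ (2*S)^d * S^d * H^d := le_mul_of_one_le_left hHd0 hC1'
  · -- lower bound
    rcases le_or_gt |a| (2 * S * b) with hcase | hcase
    · -- small numerator case
      have hHle : H ≤ 2 * S * b :=
        max_le hcase (le_mul_of_one_le_left hb.le (by linarith))
      calc H ^ d ≤ (2*S*b) ^ d := pow_le_pow_left₀ hH0 hHle d
        _ = (2*S)^d * b^d := by rw [mul_pow]
        _ ≤ (2*S)^d * (S^d * (r.den:ℤ)) := mul_le_mul_of_nonneg_left hbden (by positivity)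
        _ = (2*S)^d * S^d * (r.den:ℤ) := by ring
        _ ≤ (2*S)^d * S^d * Hf := mul_le_mul_of_nonneg_left hdenHf (by positivity)
    · -- large numerator case
      have hba : b ≤ |a| := by
        have : b ≤ 2 * S * b := le_mul_of_one_le_left hb.le (by linarith)
        linarith
      have hHa : H = |a| := max_eq_left hba
      have hMle : |M| ≤ S * |a| ^ (d-1) := by
        rw [hM_def]
        calc |∑ i ∈ range d, f.coeff i * a ^ i * b ^ (d - 1 - i)|
            ≤ ∑ i ∈ range d, |f.coeff i * a ^ i * b ^ (d - 1 - i)| :=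
              Finset.abs_sum_le_sum_abs _ _
          _ ≤ ∑ i ∈ range d, |f.coeff i| * |a| ^ (d-1) := by
              refine Finset.sum_le_sum fun i hi => ?_
              have hi' : i < d := mem_range.mp hi
              have hil : i ≤ d - 1 := by omega
              rw [abs_mul, abs_mul, abs_pow, abs_pow, abs_of_pos hb, mul_assoc]
              refine mul_le_mul_of_nonneg_left ?_ (abs_nonneg _)
              calc |a| ^ i * b ^ (d-1-i) ≤ |a| ^ i * |a| ^ (d-1-i) := by
                    exact mul_le_mul_of_nonneg_left (pow_le_pow_left₀ hb.le hba _)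
                      (by positivity)
                _ = |a| ^ (d-1) := by rw [← pow_add, Nat.add_sub_cancel' hil]
          _ ≤ ∑ i ∈ range (d+1), |f.coeff i| * |a| ^ (d-1) := by
              refine Finset.sum_le_sum_of_subset_of_nonneg
                (Finset.range_subset_range.mpr (by omega)) ?_
              intro i _ _; positivity
          _ = S * |a| ^ (d-1) := by rw [← Finset.sum_mul, hS_def]
      have hapow : |a| ^ d = |a| ^ (d-1) * |a| := by
        rw [← pow_succ]
        congr 1
        omega
      have hSb2 : 2 * S * b ≤ |a| := hcase.le
      have h2SbA : 2 * (S * |a|^(d-1) * b) ≤ |a| ^ d := by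
        rw [hapow]
        calc 2 * (S * |a|^(d-1) * b) = |a|^(d-1) * (2*S*b) := by ring
          _ ≤ |a|^(d-1) * |a| := mul_le_mul_of_nonneg_left hSb2 (by positivity)
      have hNlow : |a| ^ d ≤ 2 * |N| := by
        have h10 : |f.coeff d * a ^ d| ≤ |N| + |b * M| := by
          calc |f.coeff d * a ^ d| = |N + -(b * M)| := by rw [hNM]; congr 1; ring
            _ ≤ |N| + |-(b*M)| := abs_add_le _ _
            _ = |N| + |b * M| := by rw [abs_neg]
        have h11 : |a| ^ d ≤ |f.coeff d * a ^ d| := by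
          rw [abs_mul, abs_pow]
          exact le_mul_of_one_le_left (by positivity) hcd1
        have h12 : |b * M| ≤ S * |a|^(d-1) * b := by
          rw [abs_mul, abs_of_pos hb, mul_comm]
          exact mul_le_mul_of_nonneg_right hMle hb.le
        linarith
      have h2C : 2 ≤ (2*S)^d := by
        calc (2:ℤ) ≤ 2 * S := by linarith
          _ ≤ (2*S)^d := le_self_pow₀ (by linarith) (by omega)
      calc H ^ d = |a| ^ d := by rw [hHa]
        _ ≤ 2 * |N| := hNlow
        _ = 2 * (|r.num| * g) := by rw [hNabs]
        _ ≤ 2 * (S^d * Hf) := by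
            have h13 : |r.num| * g ≤ S^d * Hf := by
              rw [mul_comm (S^d)]
              exact mul_le_mul hnumHf hgS hgpos.le hHf0
            linarith
        _ = 2 * S^d * Hf := by ring
        _ ≤ (2*S)^d * S^d * Hf := by
            refine mul_le_mul_of_nonneg_right ?_ hHf0
            calc 2 * S^d ≤ (2*S)^d * S^d := mul_le_mul_of_nonneg_right h2C (by positivity)

lemma naiveHeight_eq (q : ℚ) :
    naiveHeight q = Real.log ((max |q.num| ((q.den:ℤ)) : ℤ) : ℝ) := by
  unfold naiveHeight
  congr 1
  push_cast
  rfl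

lemma key (f : Polynomial ℤ) (hd : 2 ≤ f.natDegree) :
    ∃ C : ℝ, ∀ q : ℚ,
      |naiveHeight (aeval q f) - (f.natDegree : ℝ) * naiveHeight q| ≤ C := by
  obtain ⟨C₁, hC₁, hcore⟩ := core f hd
  refine ⟨Real.log (C₁:ℝ), fun q => ?_⟩
  obtain ⟨h1, h2⟩ := hcore q
  set r : ℚ := aeval q f with hr_def
  have hHq1 : (1:ℤ) ≤ max |q.num| (q.den:ℤ) :=
    le_max_of_le_right (by exact_mod_cast q.pos)
  have hHr1 : (1:ℤ) ≤ max |r.num| (r.den:ℤ) :=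
    le_max_of_le_right (by exact_mod_cast r.pos)
  set x : ℝ := ((max |q.num| (q.den:ℤ) : ℤ) : ℝ) with hx_def
  set y : ℝ := ((max |r.num| (r.den:ℤ) : ℤ) : ℝ) with hy_def
  have hx1 : (1:ℝ) ≤ x := by rw [hx_def]; exact_mod_cast hHq1
  have hy1 : (1:ℝ) ≤ y := by rw [hy_def]; exact_mod_cast hHr1
  have hc1 : (1:ℝ) ≤ (C₁:ℝ) := by exact_mod_cast hC₁
  have hx0 : (0:ℝ) < x := by linarith
  have hy0 : (0:ℝ) < y := by linarith
  have hc0 : (0:ℝ) < (C₁:ℝ) := by linarith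
  have hyx : y ≤ (C₁:ℝ) * x ^ f.natDegree := by rw [hx_def, hy_def]; exact_mod_cast h1
  have hxy : x ^ f.natDegree ≤ (C₁:ℝ) * y := by rw [hx_def, hy_def]; exact_mod_cast h2
  have hlog1 : Real.log y ≤ Real.log (C₁:ℝ) + (f.natDegree : ℝ) * Real.log x := by
    calc Real.log y ≤ Real.log ((C₁:ℝ) * x ^ f.natDegree) :=
          Real.log_le_log hy0 hyx
      _ = Real.log (C₁:ℝ) + (f.natDegree : ℝ) * Real.log x := by
          rw [Real.log_mul hc0.ne' (by positivity), Real.log_pow]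
  have hlog2 : (f.natDegree : ℝ) * Real.log x ≤ Real.log (C₁:ℝ) + Real.log y := by
    calc (f.natDegree : ℝ) * Real.log x = Real.log (x ^ f.natDegree) := by
          rw [Real.log_pow]
      _ ≤ Real.log ((C₁:ℝ) * y) := Real.log_le_log (by positivity) hxy
      _ = Real.log (C₁:ℝ) + Real.log y := Real.log_mul hc0.ne' hy0.ne'
  rw [naiveHeight_eq, naiveHeight_eq, ← hx_def, ← hy_def]
  rw [abs_le]
  constructor <;> linarith

end CallSilvermanAux

open CallSilvermanAux Polynomial in
/-- Let `f ∈ ℤ[X]` be a polynomial of degree `d ≥ 2`, acting on `ℚ` by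
evaluation, and let `fⁿ` denote its `n`-fold iterate. Then for every `z ∈ ℚ`, the limit
`ĥ_f(z) = lim_{n → ∞} h(fⁿ(z)) / dⁿ` exists (the Call–Silverman canonical height). -/
theorem callSilverman_height_exists
    (f : Polynomial ℤ) (hd : 2 ≤ f.natDegree) (z : ℚ) :
    ∃ L : ℝ,
      Filter.Tendsto
        (fun n : ℕ =>
          naiveHeight ((fun w : ℚ => Polynomial.aeval w f)^[n] z) / (f.natDegree : ℝ) ^ n)
        Filter.atTop (nhds L) := by
  obtain ⟨C, hC⟩ := key f hd
  have hD2 : (2:ℝ) ≤ (f.natDegree : ℝ) := by exact_mod_cast hd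
  set D : ℝ := (f.natDegree : ℝ) with hD_def
  have hD0 : (0:ℝ) < D := by linarith
  apply cauchySeq_tendsto_of_complete
  apply cauchySeq_of_dist_le_of_summable (fun n => (C/D) * (1/D)^n)
  · intro n
    rw [Real.dist_eq]
    have hiter : (fun w : ℚ => (aeval w f : ℚ))^[n+1] z
        = aeval ((fun w : ℚ => (aeval w f : ℚ))^[n] z) f :=
      Function.iterate_succ_apply' _ _ _
    set w : ℚ := (fun w : ℚ => (aeval w f : ℚ))^[n] z with hw_def
    have hb := hC w
    have hDn : (0:ℝ) < D ^ n := by positivity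
    have hDn1 : (0:ℝ) < D ^ (n+1) := by positivity
    have heq : naiveHeight w / D ^ n
          - naiveHeight ((fun w : ℚ => (aeval w f : ℚ))^[n+1] z) / D ^ (n+1)
        = (D * naiveHeight w - naiveHeight (aeval w f)) / D ^ (n+1) := by
      rw [hiter, pow_succ]
      field_simp
    calc |naiveHeight w / D ^ n
          - naiveHeight ((fun w : ℚ => (aeval w f : ℚ))^[n+1] z) / D ^ (n+1)|
        = |D * naiveHeight w - naiveHeight (aeval w f)| / D ^ (n+1) := by
          rw [heq, abs_div, abs_of_pos hDn1]
      _ ≤ C / D ^ (n+1) := by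
          gcongr
          rw [abs_sub_comm]
          exact hb
      _ = (C/D) * (1/D)^n := by
          rw [div_pow, one_pow, pow_succ', div_mul_div_comm, mul_one]
  · exact (summable_geometric_of_lt_one (by positivity)
      (by rw [div_lt_one hD0]; linarith)).mul_left _
end
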